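/- arXiv:1002.3844 — 3 statements merged into one kernel-verified Lean document; each statement's English description precedes it below -/
import Mathlib

section
/- For every integer n ≥ 0, the number of vectors p ∈ ℤ⁵ with |p_i| ≤ n for all i and p_1+⋯+p_5 even equals 16n⁵ + 40n⁴ + 40n³ + 20n² + 5n + (1+(−1)^n)/2; moreover, for every integer n ≥ 1, the number of vectors p ∈ ℤ⁵ with max_i |p_i| = n and even coordinate sum equals 1 + 40n² + 80n⁴ + (−1)^n. -/
/-!
Summing the sign `p ↦ (-1) ^ (∑ i, p i)` over the cube `[-n, n]ᵈ` factorises as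
`(∑ x ∈ [-n, n], (-1) ^ x) ^ d = (-1) ^ (n * d)`, while `1 + (-1) ^ k` is `2` or `0` according to
the parity of `k`; hence twice the number of points with even coordinate sum is
`(2n + 1) ^ d + (-1) ^ (n * d)`. The surface count is the difference of consecutive bulk counts.
-/

open Finset

/-- `D5b n` : the number of vectors `p ∈ ℤ⁵` with `|p i| ≤ n` for all `i`
and even coordinate sum (bulk count for the `D₅` lattice). -/
noncomputable def D5b (n : ℕ) : ℕ :=
  Nat.card {p : Fin 5 → ℤ // (∀ i, |p i| ≤ (n : ℤ)) ∧ Even (∑ i, p i)}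

/-- `D5s n` : the number of vectors `p ∈ ℤ⁵` with `max_i |p i| = n`
and even coordinate sum (surface count for the `D₅` lattice). -/
noncomputable def D5s (n : ℕ) : ℕ :=
  Nat.card {p : Fin 5 → ℤ //
    (∀ i, |p i| ≤ (n : ℤ)) ∧ (∃ i, |p i| = (n : ℤ)) ∧ Even (∑ i, p i)}

theorem Int.negOnePow_sum {ι : Type*} (s : Finset ι) (f : ι → ℤ) :
    (∑ i ∈ s, f i).negOnePow = ∏ i ∈ s, (f i).negOnePow := by
  classical
  induction s using Finset.induction_on with
  | empty => simp
  | insert a s ha ih => rw [sum_insert ha, prod_insert ha, Int.negOnePow_add, ih]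

theorem sum_Icc_neg_negOnePow (n : ℕ) :
    ∑ x ∈ Icc (-(n : ℤ)) n, (x.negOnePow : ℤ) = (-1) ^ n := by
  induction n with
  | zero => simp
  | succ n ih =>
    have hIcc : Icc (-((n + 1 : ℕ) : ℤ)) (n + 1 : ℕ) =
        insert (-((n : ℤ) + 1)) (insert ((n : ℤ) + 1) (Icc (-(n : ℤ)) n)) := by
      ext x; simp only [mem_Icc, mem_insert]; omega
    rw [hIcc, sum_insert (by simp; omega), sum_insert (by simp), ih, Int.negOnePow_neg,
      Int.negOnePow_succ, Units.val_neg, Int.coe_negOnePow_natCast]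
    ring

theorem two_mul_card_filter_even_sum {ι : Type*} [Fintype ι] [DecidableEq ι] (s : Finset ℤ) :
    2 * (#{p ∈ Fintype.piFinset fun _ : ι => s | Even (∑ i, p i)} : ℤ) =
      #s ^ Fintype.card ι + (∑ x ∈ s, (x.negOnePow : ℤ)) ^ Fintype.card ι := by
  have hparity (k : ℤ) : 1 + (k.negOnePow : ℤ) = if Even k then 2 else 0 := by
    split_ifs with hk
    · simp [Int.negOnePow_even k hk]
    · simp [Int.negOnePow_odd k (Int.not_even_iff_odd.mp hk)]
  calc 2 * (#{p ∈ Fintype.piFinset fun _ : ι => s | Even (∑ i, p i)} : ℤ)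
      = ∑ p ∈ Fintype.piFinset fun _ : ι => s, (1 + ((∑ i, p i).negOnePow : ℤ)) := by
        simp only [hparity, sum_ite, sum_const]
        ring
    _ = #s ^ Fintype.card ι +
          ∑ p ∈ Fintype.piFinset fun _ : ι => s, ∏ i, ((p i).negOnePow : ℤ) := by
        simp [sum_add_distrib, Int.negOnePow_sum]
    _ = _ := by
        rw [← prod_univ_sum (fun _ => s) fun _ x => (x.negOnePow : ℤ), prod_const, card_univ]

noncomputable def evenBox (ι : Type*) [Fintype ι] [DecidableEq ι] (n : ℕ) : Finset (ι → ℤ) :=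
  {p ∈ Fintype.piFinset fun _ => Icc (-(n : ℤ)) n | Even (∑ i, p i)}

section EvenBox

variable {ι : Type*} [Fintype ι] [DecidableEq ι]

theorem mem_evenBox {n : ℕ} {p : ι → ℤ} :
    p ∈ evenBox ι n ↔ (∀ i, |p i| ≤ (n : ℤ)) ∧ Even (∑ i, p i) := by
  simp only [evenBox, mem_filter, Fintype.mem_piFinset, mem_Icc, abs_le]

theorem evenBox_subset_succ (n : ℕ) : evenBox ι n ⊆ evenBox ι (n + 1) := by
  intro p hp
  rw [mem_evenBox] at hp ⊢
  exact ⟨fun i => (hp.1 i).trans (by omega), hp.2⟩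

theorem two_mul_card_evenBox (n : ℕ) :
    2 * (#(evenBox ι n) : ℤ) = (2 * n + 1) ^ Fintype.card ι + (-1) ^ (n * Fintype.card ι) := by
  rw [evenBox, two_mul_card_filter_even_sum, sum_Icc_neg_negOnePow, Int.card_Icc, pow_mul]
  congr 2
  omega

end EvenBox

theorem D5b_eq_card_evenBox (n : ℕ) : D5b n = #(evenBox (Fin 5) n) := by
  rw [D5b, Nat.card_congr (Equiv.subtypeEquivRight fun _ => mem_evenBox.symm),
    Nat.card_eq_fintype_card, Fintype.card_coe]

theorem D5s_succ_eq_card_sdiff (n : ℕ) :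
    D5s (n + 1) = #(evenBox (Fin 5) (n + 1) \ evenBox (Fin 5) n) := by
  have hmem (p : Fin 5 → ℤ) : p ∈ evenBox (Fin 5) (n + 1) \ evenBox (Fin 5) n ↔
      (∀ i, |p i| ≤ ((n + 1 : ℕ) : ℤ)) ∧ (∃ i, |p i| = ((n + 1 : ℕ) : ℤ)) ∧ Even (∑ i, p i) := by
    simp only [mem_sdiff, mem_evenBox, not_and', not_forall, not_le]
    constructor
    · rintro ⟨⟨hle, heven⟩, hlt⟩
      obtain ⟨i, hi⟩ := hlt heven
      exact ⟨hle, ⟨i, by have := hle i; omega⟩, heven⟩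
    · rintro ⟨hle, ⟨i, hi⟩, heven⟩
      exact ⟨⟨hle, heven⟩, fun _ => ⟨i, by omega⟩⟩
  rw [D5s, Nat.card_congr (Equiv.subtypeEquivRight fun p => (hmem p).symm),
    Nat.card_eq_fintype_card, Fintype.card_coe]

theorem two_mul_D5b (n : ℕ) : 2 * (D5b n : ℤ) = (2 * n + 1) ^ 5 + (-1) ^ n := by
  rw [D5b_eq_card_evenBox, two_mul_card_evenBox, Fintype.card_fin, pow_mul',
    Odd.neg_one_pow (by decide)]

theorem D5s_succ (n : ℕ) : (D5s (n + 1) : ℤ) = D5b (n + 1) - D5b n := by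
  rw [D5s_succ_eq_card_sdiff, card_sdiff_of_subset (evenBox_subset_succ n),
    Nat.cast_sub (card_le_card (evenBox_subset_succ n)), D5b_eq_card_evenBox, D5b_eq_card_evenBox]

theorem D5_bulk_surface :
    (∀ n : ℕ, (D5b n : ℤ) = 16 * (n : ℤ) ^ 5 + 40 * (n : ℤ) ^ 4 + 40 * (n : ℤ) ^ 3
      + 20 * (n : ℤ) ^ 2 + 5 * (n : ℤ) + (1 + (-1) ^ n) / 2) ∧
    (∀ n : ℕ, 1 ≤ n → (D5s n : ℤ) =
      1 + 40 * (n : ℤ) ^ 2 + 80 * (n : ℤ) ^ 4 + (-1) ^ n) := by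
  refine ⟨fun n => ?_, fun n hn => ?_⟩
  · -- `(2n + 1) ^ 5` is odd, so the integer division by `2` in the claim is exact.
    have hdiv : 1 + (-1 : ℤ) ^ n = 2 * (D5b n - (16 * (n : ℤ) ^ 5 + 40 * (n : ℤ) ^ 4
        + 40 * (n : ℤ) ^ 3 + 20 * (n : ℤ) ^ 2 + 5 * (n : ℤ))) := by
      linear_combination -(two_mul_D5b n)
    rw [hdiv, Int.mul_ediv_cancel_left _ two_ne_zero]
    ring
  · obtain ⟨k, rfl⟩ := Nat.exists_eq_add_of_le' hn
    apply mul_left_cancel₀ (two_ne_zero : (2 : ℤ) ≠ 0)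
    have hsucc := two_mul_D5b (k + 1)
    rw [D5s_succ]
    push_cast at hsucc ⊢
    linear_combination hsucc - two_mul_D5b k
end

section
/- For every integer n ≥ 0, 315·A_7^b(n) = (2n+1)(315 + 2568n + 10936n² + 26400n³ + 37360n⁴ + 28992n⁵ + 9664n⁶). -/
/-!
Shifting every coordinate by `n`, `Akb k n` counts the `x ∈ {0, …, 2n}^(k+1)` with sum `(k+1)n`,
i.e. it is the coefficient of `X^((k+1)n)` in
`(1 + X + ⋯ + X^(2n))^(k+1) = (1 - X^(2n+1))^(k+1) / (1 - X)^(k+1)`.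
Expanding both factors gives the inclusion–exclusion formula
`Akb k n = ∑ j, (-1)^j C(k+1, j) C(k + (k+1)n - (2n+1)j, k)`, summed over `(2n+1)j ≤ (k+1)n`.
For `k = 7` only `j ≤ 3` contribute, each binomial is a polynomial of degree 7 in `n`, and the
claim is a polynomial identity.
-/

/-- `Akb k n` : the number of vectors `p ∈ ℤ^(k+1)` with `|p i| ≤ n` for all `i`
and zero coordinate sum (bulk count for the `A_k` lattice). -/
noncomputable def Akb (k n : ℕ) : ℕ :=
  Nat.card {p : Fin (k + 1) → ℤ // (∀ i, |p i| ≤ (n : ℤ)) ∧ ∑ i, p i = 0}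

/-- `Aks k n` : the number of vectors `p ∈ ℤ^(k+1)` with `max_i |p i| = n`
and zero coordinate sum (surface count for the `A_k` lattice). -/
noncomputable def Aks (k n : ℕ) : ℕ :=
  Nat.card {p : Fin (k + 1) → ℤ //
    (∀ i, |p i| ≤ (n : ℤ)) ∧ (∃ i, |p i| = (n : ℤ)) ∧ ∑ i, p i = 0}

open Finset PowerSeries

theorem coeff_geom_sum_pow_eq_card {R : Type*} [CommSemiring R] (k m s : ℕ) :
    coeff s ((∑ i ∈ range m, X ^ i : R⟦X⟧) ^ k) =
      #{x ∈ Fintype.piFinset fun _ : Fin k => range m | ∑ i, x i = s} := by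
  rw [← Fin.prod_const, prod_univ_sum]
  simp only [prod_pow_eq_pow_sum, map_sum, coeff_X_pow, sum_boole, eq_comm]

theorem geom_sum_pow_eq_one_sub_pow_mul_invOneSubPow {R : Type*} [CommRing R] (k m : ℕ) :
    (∑ i ∈ range m, X ^ i : R⟦X⟧) ^ k = (1 - X ^ m) ^ k * (invOneSubPow R k).val := by
  rw [← mul_neg_geom_sum, mul_pow, mul_comm ((1 - X) ^ k), mul_assoc,
    ← invOneSubPow_inv_eq_one_sub_pow, Units.inv_val, mul_one]

theorem coeff_one_sub_X_pow_pow_mul_invOneSubPow {R : Type*} [CommRing R] (a k m s : ℕ) :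
    coeff s ((1 - X ^ m) ^ a * (invOneSubPow R (k + 1)).val) =
      ∑ j ∈ range (a + 1), (-1) ^ j * a.choose j *
        if m * j ≤ s then ((k + (s - m * j)).choose k : R) else 0 := by
  rw [sub_eq_neg_add, add_pow, sum_mul, map_sum]
  refine sum_congr rfl fun j _ => ?_
  have hterm : (-X ^ m) ^ j * 1 ^ (a - j) * (a.choose j : R⟦X⟧) * (invOneSubPow R (k + 1)).val =
      X ^ (m * j) * (C ((-1 : R) ^ j * (a.choose j : R)) *
        PowerSeries.mk fun n => ((k + n).choose k : R)) := by
    rw [invOneSubPow_val_succ_eq_mk_add_choose, neg_pow, pow_mul]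
    simp only [one_pow, mul_one, map_mul, map_pow, map_neg, map_one, map_natCast]
    ring
  rw [hterm, coeff_X_pow_mul', coeff_C_mul, coeff_mk, mul_ite, mul_zero]

theorem Akb_eq_card (k n : ℕ) :
    Akb k n = #{x ∈ Fintype.piFinset fun _ : Fin (k + 1) => range (2 * n + 1) |
      ∑ i, x i = (k + 1) * n} := by
  rw [Akb, ← Nat.card_eq_finsetCard]
  refine Nat.card_congr
    { toFun := fun p => ⟨fun i => (p.1 i + n).toNat, ?_⟩
      invFun := fun x => ⟨fun i => (x.1 i : ℤ) - n, ?_⟩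
      left_inv := fun p => ?_
      right_inv := fun x => ?_ }
  · obtain ⟨p, hbox, hsum⟩ := p
    have hbox' : ∀ i, -(n : ℤ) ≤ p i ∧ p i ≤ n := fun i => abs_le.1 (hbox i)
    have hshift : ∀ i, ((p i + n).toNat : ℤ) = p i + n := fun i =>
      Int.toNat_of_nonneg (by have := hbox' i; omega)
    simp only [mem_filter, Fintype.mem_piFinset, mem_range]
    refine ⟨fun i => by have := hbox' i; omega, ?_⟩
    zify
    simp [hshift, sum_add_distrib, hsum]
  · obtain ⟨x, hx⟩ := x
    simp only [mem_filter, Fintype.mem_piFinset, mem_range] at hx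
    refine ⟨fun i => abs_le.2 ⟨by simp, by have := hx.1 i; simp only; omega⟩, ?_⟩
    have hsum := congrArg (Nat.cast : ℕ → ℤ) hx.2
    push_cast at hsum
    simp [sum_sub_distrib, hsum]
  · ext i
    have := abs_le.1 (p.2.1 i)
    simp only
    omega
  · ext i
    simp

theorem Akb_eq_alternating_sum {R : Type*} [CommRing R] (k n : ℕ) :
    (Akb k n : R) = ∑ j ∈ range (k + 2), (-1) ^ j * (k + 1).choose j *
      if (2 * n + 1) * j ≤ (k + 1) * n then
        ((k + ((k + 1) * n - (2 * n + 1) * j)).choose k : R) else 0 := by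
  rw [Akb_eq_card, ← coeff_geom_sum_pow_eq_card, geom_sum_pow_eq_one_sub_pow_mul_invOneSubPow,
    coeff_one_sub_X_pow_pow_mul_invOneSubPow]

theorem ite_le_cast_choose_add_tsub {R : Type*} [AddMonoidWithOne R] {a k s : ℕ}
    (h : a ≤ s + k) :
    (if a ≤ s then ((k + (s - a)).choose k : R) else 0) = ((k + s - a).choose k : R) := by
  split_ifs with has
  · rw [Nat.add_sub_assoc has]
  · rw [Nat.choose_eq_zero_of_lt (by omega), Nat.cast_zero]

theorem A7_bulk (n : ℕ) :
    315 * Akb 7 n = (2 * n + 1) * (315 + 2568 * n + 10936 * n ^ 2 + 26400 * n ^ 3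
      + 37360 * n ^ 4 + 28992 * n ^ 5 + 9664 * n ^ 6) := by
  qify
  rw [Akb_eq_alternating_sum]
  -- The terms `j ≥ 4` vanish; for `j ≤ 3` the condition can be dropped, since
  -- `(2n+1)j ≤ 8n + 7` and the binomial vanishes anyway when `8n < (2n+1)j`.
  simp (disch := omega) only [sum_range_succ, sum_range_zero, ite_le_cast_choose_add_tsub, if_neg]
  simp (disch := omega) only [Nat.cast_choose_eq_descPochhammer_div, descPochhammer_succ_eval,
    descPochhammer_zero, Polynomial.eval_one, Nat.cast_sub]
  push_cast
  ring
end

section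
/- For every integer n ≥ 0, the number of tuples (α₁, α₂, α₃, α₄, α₅, β) ∈ ℤ⁶ such that all eight integers β, −α₁+β, α₁−α₂+β, α₂−α₃+β, α₃−α₄−β, α₄−α₅−β, α₅−β, −β have absolute value at most n equals (2n+1)·A_5^b(n); in particular 5·E_6^b(n) = (2n+1)²(5 + 27n + 71n² + 88n³ + 44n⁴), where E_6^b(n) denotes this count. -/
/-- `E6b n` : the number of integer-coordinate points of the `E₆` lattice whose
eight Cartesian coordinates all have absolute value at most `n`, parametrized by
tuples `(α₁, α₂, α₃, α₄, α₅, β) ∈ ℤ⁶`. -/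
noncomputable def E6b (n : ℕ) : ℕ :=
  Nat.card {t : ℤ × ℤ × ℤ × ℤ × ℤ × ℤ //
    |t.2.2.2.2.2| ≤ (n : ℤ) ∧
    |-t.1 + t.2.2.2.2.2| ≤ (n : ℤ) ∧
    |t.1 - t.2.1 + t.2.2.2.2.2| ≤ (n : ℤ) ∧
    |t.2.1 - t.2.2.1 + t.2.2.2.2.2| ≤ (n : ℤ) ∧
    |t.2.2.1 - t.2.2.2.1 - t.2.2.2.2.2| ≤ (n : ℤ) ∧
    |t.2.2.2.1 - t.2.2.2.2.1 - t.2.2.2.2.2| ≤ (n : ℤ) ∧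
    |t.2.2.2.2.1 - t.2.2.2.2.2| ≤ (n : ℤ) ∧
    |-t.2.2.2.2.2| ≤ (n : ℤ)}

open Finset

theorem sum_Icc_neg_add_one {M : Type*} [AddCommMonoid M] (f : ℤ → M) (m : ℕ) :
    ∑ x ∈ Icc (-(m + 1 : ℤ)) (m + 1), f x =
      f (-(m + 1)) + f (m + 1) + ∑ x ∈ Icc (-m : ℤ) m, f x := by
  have hIcc : Icc (-(m + 1 : ℤ)) (m + 1) =
      insert (-(m + 1 : ℤ)) (insert (m + 1 : ℤ) (Icc (-m : ℤ) m)) := by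
    ext; simp only [mem_insert, mem_Icc]; omega
  rw [hIcc, sum_insert (by simp; omega), sum_insert (by simp), add_assoc]

theorem sum_Icc_neg_sub_sq_sq (c : ℚ) (m : ℕ) :
    ∑ s ∈ Icc (-m : ℤ) m, (c - s ^ 2) ^ 2 =
      (2 * m + 1) *
        (c ^ 2 - 2 * c * m * (m + 1) / 3 + m * (m + 1) * (3 * m ^ 2 + 3 * m - 1) / 15) := by
  induction m with
  | zero => simp
  | succ m ih =>
    push_cast
    rw [sum_Icc_neg_add_one, ih]
    push_cast
    ring

theorem sum_Icc_triangular_sq (k : ℕ) :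
    ∑ j ∈ Icc 1 k, (j * (j + 1) / 2 : ℚ) ^ 2 =
      k * (k + 1) * (k + 2) * (3 * k ^ 2 + 6 * k + 1) / 60 := by
  induction k with
  | zero => simp
  | succ k ih =>
    rw [sum_Icc_succ_top (by omega), ih]
    push_cast
    ring

section BoxSumCount

noncomputable def intCube (n m : ℕ) : Finset (Fin m → ℤ) :=
  Fintype.piFinset fun _ => Icc (-n : ℤ) n

noncomputable def boxSumCount (n m : ℕ) (s : ℤ) : ℕ :=
  #{p ∈ intCube n m | ∑ i, p i = s}

variable {n : ℕ}

theorem Akb_eq_boxSumCount (k : ℕ) : Akb k n = boxSumCount n (k + 1) 0 := by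
  rw [Akb, boxSumCount, ← Nat.card_eq_finsetCard]
  exact Nat.card_congr (Equiv.subtypeEquivRight fun p => by simp [intCube, abs_le])

theorem abs_sum_le_of_mem_intCube {m : ℕ} {p : Fin m → ℤ} (hp : p ∈ intCube n m) :
    |∑ i, p i| ≤ m * n :=
  calc |∑ i, p i| ≤ ∑ i, |p i| := abs_sum_le_sum_abs _ _
    _ ≤ ∑ _ : Fin m, (n : ℤ) :=
      sum_le_sum fun i _ => abs_le.2 (mem_Icc.1 (Fintype.mem_piFinset.1 hp i))
    _ = m * n := by simp

theorem boxSumCount_eq_zero {m : ℕ} {s : ℤ} (hs : m * n < |s|) : boxSumCount n m s = 0 :=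
  card_eq_zero.2 <| filter_eq_empty_iff.2 fun _ hp hps =>
    hs.not_ge (hps ▸ abs_sum_le_of_mem_intCube hp)

theorem boxSumCount_neg (m : ℕ) (s : ℤ) : boxSumCount n m (-s) = boxSumCount n m s :=
  card_equiv (Equiv.neg _) fun p => by
    simp only [intCube, mem_filter, Fintype.mem_piFinset, mem_Icc, Equiv.neg_apply, Pi.neg_apply,
      sum_neg_distrib, neg_le, neg_le_neg_iff, neg_eq_iff_eq_neg]
    exact and_congr_left' (forall_congr' fun _ => and_comm)

theorem boxSumCount_add (m l : ℕ) (t : ℤ) :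
    boxSumCount n (m + l) t =
      ∑ s ∈ Icc (-(m * n : ℤ)) (m * n), boxSumCount n m s * boxSumCount n l (t - s) := by
  have hsplit : boxSumCount n (m + l) t =
      #{x ∈ intCube n m ×ˢ intCube n l | ∑ i, x.1 i + ∑ i, x.2 i = t} :=
    card_equiv (Fin.appendEquiv m l).symm fun p => by
      simp [intCube, Fin.forall_fin_add, Fin.sum_univ_add]
  have hmaps : ∀ x ∈ intCube n m ×ˢ intCube n l, ∑ i, x.1 i ∈ Icc (-(m * n : ℤ)) (m * n) :=
    fun x hx => mem_Icc.2 (abs_le.1 (abs_sum_le_of_mem_intCube (mem_product.1 hx).1))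
  rw [hsplit, card_eq_sum_card_fiberwise fun x hx => hmaps x (mem_filter.1 hx).1]
  refine sum_congr rfl fun s _ => ?_
  rw [filter_filter, boxSumCount, boxSumCount, ← card_product, ← filter_product]
  congr 1
  exact filter_congr fun x _ => by constructor <;> rintro ⟨h₁, h₂⟩ <;> constructor <;> linarith

theorem boxSumCount_one (u : ℤ) : boxSumCount n 1 u = if |u| ≤ n then 1 else 0 := by
  rw [boxSumCount, card_equiv (Equiv.funUnique (Fin 1) ℤ) (t := {a ∈ Icc (-n : ℤ) n | a = u})
    fun p => by simp [intCube]]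
  simp [filter_eq', apply_ite card, abs_le]

theorem boxSumCount_succ (m : ℕ) (s : ℤ) :
    boxSumCount n (m + 1) s = ∑ t ∈ Icc (s - n) (s + n), boxSumCount n m t := by
  simp_rw [boxSumCount_add m 1, boxSumCount_one, mul_ite, mul_one, mul_zero, ← sum_filter]
  refine sum_subset (fun t ht => ?_) fun t ht hts => boxSumCount_eq_zero ?_
  · simp only [mem_filter, mem_Icc, abs_le] at ht ⊢; omega
  · simp only [mem_filter, mem_Icc, abs_le, not_and, not_le] at ht hts
    rw [lt_abs]
    omega

theorem boxSumCount_succ_sub_one (m : ℕ) (s : ℤ) :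
    boxSumCount n (m + 1) (s - 1) + boxSumCount n m (s + n) =
      boxSumCount n (m + 1) s + boxSumCount n m (s - 1 - n) := by
  have h₁ : Icc (s - 1 - n) (s + n) = insert (s - 1 - n) (Icc (s - n) (s + n)) := by
    ext; simp only [mem_insert, mem_Icc]; omega
  have h₂ : Icc (s - 1 - n) (s + n) = insert (s + n) (Icc (s - 1 - n) (s - 1 + n)) := by
    ext; simp only [mem_insert, mem_Icc]; omega
  rw [boxSumCount_succ, boxSumCount_succ, add_comm, ← sum_insert (by simp), ← h₂, h₁,
    sum_insert (by simp), add_comm]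

theorem boxSumCount_two {t : ℤ} (ht₀ : 0 ≤ t) (ht : t ≤ 2 * n + 1) :
    (boxSumCount n 2 t : ℤ) = 2 * n + 1 - t := by
  induction t, ht using Int.leInductionDown with
  | base => rw [boxSumCount_eq_zero (by rw [abs_of_nonneg ht₀]; push_cast; omega)]; simp
  | pred t _ ih =>
    have h := boxSumCount_succ_sub_one (n := n) 1 t
    simp only [Nat.reduceAdd, boxSumCount_one] at h
    rw [if_neg (by rw [abs_le]; omega), if_pos (by rw [abs_le]; omega)] at h
    omega

theorem boxSumCount_three_of_le {s : ℤ} (hs₀ : n ≤ s) (hs : s ≤ 3 * n + 1) :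
    2 * (boxSumCount n 3 s : ℤ) = (3 * n + 1 - s) * (3 * n + 2 - s) := by
  induction s, hs using Int.leInductionDown with
  | base => rw [boxSumCount_eq_zero (by rw [abs_of_nonneg (by omega)]; push_cast; omega)]; ring
  | pred s _ ih =>
    have h := boxSumCount_succ_sub_one (n := n) 2 s
    have h₀ : boxSumCount n 2 (s + n) = 0 :=
      boxSumCount_eq_zero (by rw [abs_of_nonneg (by omega)]; push_cast; omega)
    have h₂ := boxSumCount_two (n := n) (t := s - 1 - n) (by omega) (by omega)
    simp only [Nat.reduceAdd, h₀, add_zero] at h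
    zify at h
    linear_combination ih (by omega) + 2 * h + 2 * h₂

theorem boxSumCount_three_of_nonneg_of_le {s : ℤ} (hs₀ : 0 ≤ s) (hs : s ≤ n) :
    (boxSumCount n 3 s : ℤ) = 3 * n ^ 2 + 3 * n + 1 - s ^ 2 := by
  induction s, hs using Int.leInductionDown with
  | base => linarith [boxSumCount_three_of_le (n := n) le_rfl (by omega)]
  | pred s _ ih =>
    have h := boxSumCount_succ_sub_one (n := n) 2 s
    have h₁ := boxSumCount_two (n := n) (t := s + n) (by omega) (by omega)
    have h₂ : (boxSumCount n 2 (s - 1 - n) : ℤ) = n + s := by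
      rw [← boxSumCount_neg, boxSumCount_two (by omega) (by omega)]; ring
    simp only [Nat.reduceAdd] at h
    zify at h
    linear_combination ih (by omega) + h + h₂ - h₁

theorem boxSumCount_three_of_abs_le {s : ℤ} (hs : |s| ≤ n) :
    (boxSumCount n 3 s : ℤ) = 3 * n ^ 2 + 3 * n + 1 - s ^ 2 := by
  obtain ⟨hs₁, hs₂⟩ := abs_le.1 hs
  rcases le_total 0 s with h | h
  · exact boxSumCount_three_of_nonneg_of_le h hs₂
  · rw [← boxSumCount_neg, boxSumCount_three_of_nonneg_of_le (by omega) (by omega), neg_sq]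

-- For `n ≤ s ≤ 3n`, `T(s) = j(j+1)/2` with `j = 3n + 1 - s`.
theorem sum_sq_boxSumCount_three_of_le {m : ℕ} (hm₀ : n ≤ m) (hm : m ≤ 3 * n) :
    ∑ s ∈ Icc (-m : ℤ) m, (boxSumCount n 3 s : ℚ) ^ 2 =
      ∑ s ∈ Icc (-n : ℤ) n, (3 * n ^ 2 + 3 * n + 1 - s ^ 2 : ℚ) ^ 2 +
        2 * ∑ j ∈ Icc (3 * n + 1 - m) (2 * n), (j * (j + 1) / 2 : ℚ) ^ 2 := by
  induction m, hm₀ using Nat.le_induction with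
  | base =>
    rw [Icc_eq_empty (a := 3 * n + 1 - n) (by omega), sum_empty, mul_zero, add_zero]
    refine sum_congr rfl fun s hs => ?_
    have h := congrArg (Int.cast : ℤ → ℚ)
      (boxSumCount_three_of_abs_le (n := n) (abs_le.2 (mem_Icc.1 hs)))
    push_cast at h
    rw [h]
  | succ m hm₀ ih =>
    have h := congrArg (Int.cast : ℤ → ℚ)
      (boxSumCount_three_of_le (n := n) (s := m + 1) (by omega) (by omega))
    push_cast at h
    have hIcc : Icc (3 * n - m) (2 * n) = insert (3 * n - m) (Icc (3 * n + 1 - m) (2 * n)) := by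
      ext; simp only [mem_insert, mem_Icc]; omega
    push_cast
    rw [sum_Icc_neg_add_one, boxSumCount_neg, ih (by omega), hIcc, sum_insert (by simp; omega),
      Nat.cast_sub (by omega)]
    push_cast
    linear_combination ((boxSumCount n 3 (m + 1) : ℚ) + (3 * n - m) * (3 * n - m + 1) / 2) * h

end BoxSumCount

theorem five_mul_Akb_five (n : ℕ) :
    5 * Akb 5 n = (2 * n + 1) * (5 + 27 * n + 71 * n ^ 2 + 88 * n ^ 3 + 44 * n ^ 4) := by
  have h : (Akb 5 n : ℚ) =
      ∑ s ∈ Icc (-(3 * n : ℕ) : ℤ) (3 * n : ℕ), (boxSumCount n 3 s : ℚ) ^ 2 := by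
    rw [Akb_eq_boxSumCount, show 5 + 1 = 3 + 3 from rfl, boxSumCount_add]
    push_cast
    simp_rw [zero_sub, boxSumCount_neg, sq]
  rw [sum_sq_boxSumCount_three_of_le (by omega) le_rfl, sum_Icc_neg_sub_sq_sq,
    show 3 * n + 1 - 3 * n = 1 by omega, sum_Icc_triangular_sq] at h
  have h₅ : (5 * Akb 5 n : ℚ) =
      (2 * n + 1) * (5 + 27 * n + 71 * n ^ 2 + 88 * n ^ 3 + 44 * n ^ 4) := by
    rw [h]; push_cast; ring
  exact_mod_cast h₅

def e6CoordEquiv : ℤ × ℤ × ℤ × ℤ × ℤ × ℤ ≃ ℤ × {p : Fin 6 → ℤ // ∑ i, p i = 0} where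
  toFun := fun ⟨a₁, a₂, a₃, a₄, a₅, b⟩ =>
    (b, ⟨![-a₁ + b, a₁ - a₂ + b, a₂ - a₃ + b, a₃ - a₄ - b, a₄ - a₅ - b, a₅ - b], by
      simp [Fin.sum_univ_succ]; ring⟩)
  invFun := fun ⟨b, p, _⟩ =>
    (b - p 0, 2 * b - p 0 - p 1, 3 * b - p 0 - p 1 - p 2, 2 * b - p 0 - p 1 - p 2 - p 3,
      b - p 0 - p 1 - p 2 - p 3 - p 4, b)
  left_inv := by
    rintro ⟨a₁, a₂, a₃, a₄, a₅, b⟩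
    simp only [Prod.mk.injEq, Matrix.cons_val]
    refine ⟨?_, ?_, ?_, ?_, ?_, trivial⟩ <;> ring
  right_inv := by
    rintro ⟨b, p, hp⟩
    rw [Fin.sum_univ_six] at hp
    refine Prod.ext rfl (Subtype.ext (funext fun i => ?_))
    fin_cases i <;> simp <;> linarith

theorem E6b_eq_mul_Akb (n : ℕ) : E6b n = (2 * n + 1) * Akb 5 n := by
  have hβ : Nat.card {b : ℤ // |b| ≤ n} = 2 * n + 1 := by
    rw [Nat.card_congr (Equiv.subtypeEquivRight fun b => abs_le.trans mem_Icc.symm),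
      Nat.card_eq_finsetCard, Int.card_Icc]
    omega
  have hp : Nat.card {p : {p : Fin 6 → ℤ // ∑ i, p i = 0} // ∀ i, |p.1 i| ≤ n} = Akb 5 n :=
    Nat.card_congr <| (Equiv.subtypeSubtypeEquivSubtypeInter _
      fun p : Fin 6 → ℤ => ∀ i, |p i| ≤ (n : ℤ)).trans (Equiv.subtypeEquivRight fun _ => and_comm)
  rw [E6b, Nat.card_congr ((e6CoordEquiv.subtypeEquiv fun t => ?_).trans
    (Equiv.subtypeProdEquivProd (p := fun b : ℤ => |b| ≤ n)
      (q := fun p => ∀ i, |p.1 i| ≤ (n : ℤ)))),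
    Nat.card_prod, hβ, hp]
  obtain ⟨a₁, a₂, a₃, a₄, a₅, b⟩ := t
  simp [e6CoordEquiv, Fin.forall_fin_succ, abs_neg]
  tauto

theorem E6_bulk (n : ℕ) :
    E6b n = (2 * n + 1) * Akb 5 n ∧
    5 * E6b n = (2 * n + 1) ^ 2 *
      (5 + 27 * n + 71 * n ^ 2 + 88 * n ^ 3 + 44 * n ^ 4) := by
  refine ⟨E6b_eq_mul_Akb n, ?_⟩
  rw [E6b_eq_mul_Akb, mul_left_comm, five_mul_Akb_five]
  ring
end
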